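/- Monotonicity of the weak curried HORPO: if s ⊒ s' with s, s' : σ ⇒ τ and t ⊒ t' with t, t' : σ, then s t ⊒ s' t'. -/
import Mathlib


namespace Horpo

/-- Simple types over a single collapsed sort ι. -/
inductive Ty where
  | base : Ty
  | arrow : Ty → Ty → Ty
deriving DecidableEq

/-- The argument types of a type: argTypes (σ₁ ⇒ … ⇒ σ_m ⇒ ι) = [σ₁,…,σ_m]. -/
def Ty.argTypes : Ty → List Ty
  | .base => []
  | .arrow a b => a :: b.argTypes

/-- A signature: typed function symbols over F, typed variables over V,
    a precedence ⊵ (`prec`) and a filter π (`pi`, using 1-based indices). -/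
structure Sig (F V : Type) where
  fty : F → Ty
  vty : V → Ty
  prec : F → F → Prop
  pi : F → Finset ℕ

variable {F V : Type}

/-- f ≡ g : equivalence part of the precedence. -/
def Sig.equiv (S : Sig F V) (f g : F) : Prop := S.prec f g ∧ S.prec g f

/-- f ⊳ g : strict part of the precedence. -/
def Sig.sgt (S : Sig F V) (f g : F) : Prop := S.prec f g ∧ ¬ S.prec g f

/-- maximal arity m of a symbol f :: σ₁ ⇒ … ⇒ σ_m ⇒ ι. -/
def Sig.arity (S : Sig F V) (f : F) : ℕ := (S.fty f).argTypes.length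

/-- Applicative (curried) terms. -/
inductive Tm (F V : Type) where
  | fv : V → Tm F V
  | fn : F → Tm F V
  | app : Tm F V → Tm F V → Tm F V

/-- h t₁ ⋯ t_n -/
def Tm.appList (h : Tm F V) (ts : List (Tm F V)) : Tm F V := ts.foldl Tm.app h

/-- Partial typing function. -/
def typeOf (S : Sig F V) : Tm F V → Option Ty
  | .fv x => some (S.vty x)
  | .fn f => some (S.fty f)
  | .app s t =>
    match typeOf S s, typeOf S t with
    | some (.arrow a b), some c => if a = c then some b else none
    | _, _ => none

/-- s and t are well-typed with the same type (structure). -/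
def sameTy (S : Sig F V) (s t : Tm F V) : Prop :=
  ∃ τ, typeOf S s = some τ ∧ typeOf S t = some τ

/-- The equivalence relation ≈, by the rules (Eq-mono) and (Eq-args). -/
inductive Approx (S : Sig F V) : Tm F V → Tm F V → Prop where
  | mono (x : V) (ss ts : List (Tm F V)) :
      ss.length = ts.length →
      (∀ (i : ℕ) (h1 : i < ss.length) (h2 : i < ts.length),
        Approx S (ss.get ⟨i, h1⟩) (ts.get ⟨i, h2⟩)) →
      sameTy S (Tm.appList (.fv x) ss) (Tm.appList (.fv x) ts) →
      Approx S (Tm.appList (.fv x) ss) (Tm.appList (.fv x) ts)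
  | args (f g : F) (ss ts : List (Tm F V)) :
      S.equiv f g → S.fty f = S.fty g → S.pi f = S.pi g →
      ss.length = ts.length →
      (∀ (i : ℕ) (h1 : i < ss.length) (h2 : i < ts.length),
        i + 1 ∈ S.pi f → Approx S (ss.get ⟨i, h1⟩) (ts.get ⟨i, h2⟩)) →
      sameTy S (Tm.appList (.fn f) ss) (Tm.appList (.fn g) ts) →
      Approx S (Tm.appList (.fn f) ss) (Tm.appList (.fn g) ts)

mutual
/-- s ⊒ t  iff  s ≈ t or s ⊐ t. -/
inductive GrEq (S : Sig F V) : Tm F V → Tm F V → Prop where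
  | of_approx {s t : Tm F V} : Approx S s t → GrEq S s t
  | of_gr {s t : Tm F V} : Gr S s t → GrEq S s t

/-- The strict relation ⊐, by rules (Gr-mono), (Gr-args), (Gr-rpo). -/
inductive Gr (S : Sig F V) : Tm F V → Tm F V → Prop where
  | mono (x : V) (ss ts : List (Tm F V)) (i : ℕ)
      (hi1 : i < ss.length) (hi2 : i < ts.length) :
      ss.length = ts.length →
      (∀ (j : ℕ) (h1 : j < ss.length) (h2 : j < ts.length),
        GrEq S (ss.get ⟨j, h1⟩) (ts.get ⟨j, h2⟩)) →
      Gr S (ss.get ⟨i, hi1⟩) (ts.get ⟨i, hi2⟩) →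
      sameTy S (Tm.appList (.fv x) ss) (Tm.appList (.fv x) ts) →
      Gr S (Tm.appList (.fv x) ss) (Tm.appList (.fv x) ts)
  | args (f g : F) (ss ts : List (Tm F V)) (i : ℕ)
      (hi1 : i < ss.length) (hi2 : i < ts.length) :
      S.equiv f g → S.fty f = S.fty g → S.pi f = S.pi g →
      ss.length = ts.length →
      (∀ (j : ℕ) (h1 : j < ss.length) (h2 : j < ts.length),
        j + 1 ∈ S.pi f → GrEq S (ss.get ⟨j, h1⟩) (ts.get ⟨j, h2⟩)) →
      i + 1 ∈ S.pi f →
      Gr S (ss.get ⟨i, hi1⟩) (ts.get ⟨i, hi2⟩) →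
      sameTy S (Tm.appList (.fn f) ss) (Tm.appList (.fn g) ts) →
      Gr S (Tm.appList (.fn f) ss) (Tm.appList (.fn g) ts)
  | rpo {s t : Tm F V} : Rpo S s t → sameTy S s t → Gr S s t

/-- The relation ⊐⊐, by rules (Rpo-select), (Rpo-appl), (Rpo-copy), (Rpo-lex).
    In each case the left side is f s₁⋯s_n with {n+1,…,m} ⊆ π(f). -/
inductive Rpo (S : Sig F V) : Tm F V → Tm F V → Prop where
  | select (f : F) (ss : List (Tm F V)) (t : Tm F V) (i : ℕ) (hi : i < ss.length) :
      ss.length ≤ S.arity f →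
      (∀ k : ℕ, ss.length + 1 ≤ k → k ≤ S.arity f → k ∈ S.pi f) →
      i + 1 ∈ S.pi f →
      GrEq S (ss.get ⟨i, hi⟩) t →
      Rpo S (Tm.appList (.fn f) ss) t
  | appl (f : F) (ss : List (Tm F V)) (t0 : Tm F V) (ts : List (Tm F V)) :
      ss.length ≤ S.arity f →
      (∀ k : ℕ, ss.length + 1 ≤ k → k ≤ S.arity f → k ∈ S.pi f) →
      ts ≠ [] →
      (∀ (i : ℕ) (h : i < ts.length), Rpo S (Tm.appList (.fn f) ss) (ts.get ⟨i, h⟩)) →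
      Rpo S (Tm.appList (.fn f) ss) (Tm.appList t0 ts)
  | copy (f : F) (ss : List (Tm F V)) (g : F) (ts : List (Tm F V)) :
      ss.length ≤ S.arity f →
      (∀ k : ℕ, ss.length + 1 ≤ k → k ≤ S.arity f → k ∈ S.pi f) →
      S.sgt f g →
      (∀ (i : ℕ) (h : i < ts.length), i + 1 ∈ S.pi g →
        Rpo S (Tm.appList (.fn f) ss) (ts.get ⟨i, h⟩)) →
      Rpo S (Tm.appList (.fn f) ss) (Tm.appList (.fn g) ts)
  | lex (f : F) (ss : List (Tm F V)) (g : F) (ts : List (Tm F V)) (i : ℕ)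
      (hi1 : i < ss.length) (hi2 : i < ts.length) :
      ss.length ≤ S.arity f →
      (∀ k : ℕ, ss.length + 1 ≤ k → k ≤ S.arity f → k ∈ S.pi f) →
      S.equiv f g →
      i + 1 ∈ S.pi f → i + 1 ∈ S.pi g →
      (∀ k : ℕ, 1 ≤ k → k ≤ i + 1 → (k ∈ S.pi f ↔ k ∈ S.pi g)) →
      (∀ (j : ℕ) (h1 : j < ss.length) (h2 : j < ts.length), j < i → j + 1 ∈ S.pi f →
        Approx S (ss.get ⟨j, h1⟩) (ts.get ⟨j, h2⟩)) →
      Gr S (ss.get ⟨i, hi1⟩) (ts.get ⟨i, hi2⟩) →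
      (∀ (j : ℕ) (h : j < ts.length), i < j → j + 1 ∈ S.pi g →
        Rpo S (Tm.appList (.fn f) ss) (ts.get ⟨j, h⟩)) →
      Rpo S (Tm.appList (.fn f) ss) (Tm.appList (.fn g) ts)
end

/-- Substitution application. -/
def subst (γ : V → Tm F V) : Tm F V → Tm F V
  | .fv x => γ x
  | .fn f => .fn f
  | .app s t => .app (subst γ s) (subst γ t)

/-- s is terminating: no infinite ⊐-descending sequence starting at s. -/
def Terminating (S : Sig F V) (s : Tm F V) : Prop :=
  ¬ ∃ c : ℕ → Tm F V, c 0 = s ∧ ∀ n, Gr S (c n) (c (n + 1))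

/-- Computability, by recursion on the type structure. -/
def Computable (S : Sig F V) : Ty → Tm F V → Prop
  | .base, s => Terminating S s
  | .arrow a b, s =>
      ∀ t : Tm F V, typeOf S t = some a → Computable S a t → Computable S b (Tm.app s t)

/-- s is a well-typed computable term. -/
def Comp (S : Sig F V) (s : Tm F V) : Prop :=
  ∃ τ, typeOf S s = some τ ∧ Computable S τ s

/-- [s_i | i ∈ π(f)] : the list of arguments regarded by the filter. -/
def filtered (S : Sig F V) (f : F) (ss : List (Tm F V)) : List (Tm F V) :=
  (List.range ss.length).filterMap (fun i => if i + 1 ∈ S.pi f then ss[i]? else none)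

/-- The (E, R)-lexicographic extension to lists: xs is greater than ys. -/
def LexExt (E R : α → α → Prop) (xs ys : List α) : Prop :=
  ∃ (i : ℕ) (h1 : i < xs.length) (h2 : i < ys.length),
    (∀ (j : ℕ) (hj1 : j < xs.length) (hj2 : j < ys.length), j < i →
      E (xs.get ⟨j, hj1⟩) (ys.get ⟨j, hj2⟩)) ∧
    R (xs.get ⟨i, h1⟩) (ys.get ⟨i, h2⟩)


lemma appList_concat (h : Tm F V) (l : List (Tm F V)) (a : Tm F V) :
    Tm.appList h (l ++ [a]) = Tm.app (Tm.appList h l) a := by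
  simp [Tm.appList]

lemma approx_sameTy {S : Sig F V} {s t : Tm F V} (h : Approx S s t) : sameTy S s t := by
  cases h with
  | mono x ss ts _ _ hty => exact hty
  | args f g ss ts _ _ _ _ _ hty => exact hty

lemma gr_sameTy {S : Sig F V} {s t : Tm F V} (h : Gr S s t) : sameTy S s t := by
  cases h with
  | mono x ss ts i hi1 hi2 _ _ _ hty => exact hty
  | args f g ss ts i hi1 hi2 _ _ _ _ _ _ _ hty => exact hty
  | rpo _ hty => exact hty

lemma greq_sameTy {S : Sig F V} {s t : Tm F V} (h : GrEq S s t) : sameTy S s t := by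
  cases h with
  | of_approx h => exact approx_sameTy h
  | of_gr h => exact gr_sameTy h

lemma typeOf_app {S : Sig F V} {s t : Tm F V} {σ τ : Ty}
    (hs : typeOf S s = some (.arrow σ τ)) (ht : typeOf S t = some σ) :
    typeOf S (Tm.app s t) = some τ := by
  simp [typeOf, hs, ht]

lemma typeOf_appList {S : Sig F V} (ss : List (Tm F V)) (h : Tm F V) (ρ : Ty)
    (hty : typeOf S (Tm.appList h ss) = some ρ) :
    ∃ ζ, typeOf S h = some ζ ∧ ζ.argTypes.length = ss.length + ρ.argTypes.length := by
  induction ss generalizing h with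
  | nil => exact ⟨ρ, hty, by simp⟩
  | cons a l ih =>
    have e : Tm.appList h (a :: l) = Tm.appList (Tm.app h a) l := rfl
    rw [e] at hty
    obtain ⟨ζ', h1, h2⟩ := ih (Tm.app h a) hty
    rcases eh : typeOf S h with _ | ζ
    · simp [typeOf, eh] at h1
    cases ζ with
    | base => simp [typeOf, eh] at h1
    | arrow c d =>
      rcases ea : typeOf S a with _ | c'
      · simp [typeOf, eh, ea] at h1
      by_cases hc : c = c'
      · refine ⟨.arrow c d, rfl, ?_⟩
        simp [typeOf, eh, ea, hc] at h1
        subst h1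
        simp [Ty.argTypes, h2]
        omega
      · simp [typeOf, eh, ea, hc] at h1

lemma get_concat_lt {α} (l : List α) (a : α) (j : ℕ) (h : j < (l ++ [a]).length)
    (hj : j < l.length) : (l ++ [a]).get ⟨j, h⟩ = l.get ⟨j, hj⟩ := by
  simp [List.getElem_append_left hj]

lemma get_concat_at {α} (l : List α) (a : α) (j : ℕ) (h : j < (l ++ [a]).length)
    (hj : j = l.length) : (l ++ [a]).get ⟨j, h⟩ = a := by
  subst hj; simp

lemma rpo_head {S : Sig F V} {s u : Tm F V} (h : Rpo S s u) :
    ∃ f ss, s = Tm.appList (.fn f) ss ∧ ss.length ≤ S.arity f ∧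
      (∀ k, ss.length + 1 ≤ k → k ≤ S.arity f → k ∈ S.pi f) := by
  cases h with
  | select f ss t i hi h1 h2 _ _ => exact ⟨f, ss, rfl, h1, h2⟩
  | appl f ss t0 ts h1 h2 _ _ => exact ⟨f, ss, rfl, h1, h2⟩
  | copy f ss g ts h1 h2 _ _ => exact ⟨f, ss, rfl, h1, h2⟩
  | lex f ss g ts i hi1 hi2 h1 h2 _ _ _ _ _ _ _ => exact ⟨f, ss, rfl, h1, h2⟩

lemma length_lt_arity {S : Sig F V} {f : F} {ss : List (Tm F V)} {σ τ : Ty}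
    (hs : typeOf S (Tm.appList (.fn f) ss) = some (.arrow σ τ)) :
    ss.length < S.arity f := by
  obtain ⟨ζ, h1, h2⟩ := typeOf_appList ss _ _ hs
  have : ζ = S.fty f := by
    simpa [typeOf] using h1.symm
  subst this
  simp only [Sig.arity, h2, Ty.argTypes]
  simp

lemma rpo_app {S : Sig F V} {s s' t t' : Tm F V} {σ τ : Ty}
    (hr : Rpo S s s') (hs : typeOf S s = some (.arrow σ τ)) (h2 : GrEq S t t') :
    Rpo S (Tm.app s t) (Tm.app s' t') := by
  obtain ⟨f, ss, rfl, har, hfil⟩ := rpo_head hr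
  have hlt : ss.length < S.arity f := length_lt_arity hs
  rw [← appList_concat]
  have happ : Tm.app s' t' = Tm.appList s' [t'] := rfl
  rw [happ]
  refine Rpo.appl f (ss ++ [t]) s' [t'] (by simp; omega)
    (fun k hk1 hk2 => hfil k (by simp at hk1; omega) hk2) (by simp) ?_
  intro i hi
  have hi0 : i = 0 := by simp at hi; omega
  subst hi0
  have : ([t'] : List (Tm F V)).get ⟨0, hi⟩ = t' := rfl
  rw [this]
  refine Rpo.select f (ss ++ [t]) t' ss.length (by simp) (by simp; omega)
    (fun k hk1 hk2 => hfil k (by simp at hk1; omega) hk2)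
    (hfil (ss.length + 1) le_rfl hlt) ?_
  rw [get_concat_at _ _ _ _ rfl]
  exact h2

/-- Monotonicity of ⊒: if s ⊒ s' with s : σ ⇒ τ and t ⊒ t' with t : σ,
then s t ⊒ s' t'. -/
theorem greq_mono (S : Sig F V) (σ τ : Ty) (s s' t t' : Tm F V)
    (hs : typeOf S s = some (.arrow σ τ)) (ht : typeOf S t = some σ)
    (h1 : GrEq S s s') (h2 : GrEq S t t') :
    GrEq S (Tm.app s t) (Tm.app s' t') := by
  obtain ⟨ρ, es, es'⟩ := greq_sameTy h1
  rw [hs] at es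
  obtain rfl : Ty.arrow σ τ = ρ := by injection es
  obtain ⟨ρ', et, et'⟩ := greq_sameTy h2
  rw [ht] at et
  obtain rfl : σ = ρ' := by injection et
  have hty : sameTy S (Tm.app s t) (Tm.app s' t') :=
    ⟨τ, typeOf_app hs ht, typeOf_app es' et'⟩
  cases h1 with
  | of_approx ha =>
    cases ha with
    | mono x ss ts hlen hpt _ =>
      rw [← appList_concat, ← appList_concat]
      have hty' : sameTy S (Tm.appList (.fv x) (ss ++ [t]))
          (Tm.appList (.fv x) (ts ++ [t'])) := by
        rw [appList_concat, appList_concat]; exact hty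
      cases h2 with
      | of_approx hb =>
        refine .of_approx (Approx.mono x (ss ++ [t]) (ts ++ [t']) (by simp [hlen]) ?_ hty')
        intro i hi1 hi2
        rcases Nat.lt_or_ge i ss.length with hlt | hge
        · rw [get_concat_lt _ _ _ _ hlt, get_concat_lt _ _ _ _ (hlen ▸ hlt)]
          exact hpt i hlt (hlen ▸ hlt)
        · have hi : i = ss.length := by simp at hi1; omega
          rw [get_concat_at _ _ _ _ hi, get_concat_at _ _ _ _ (hlen ▸ hi)]
          exact hb
      | of_gr hb =>
        refine .of_gr (Gr.mono x (ss ++ [t]) (ts ++ [t']) ss.length (by simp)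
          (by simp [hlen]) (by simp [hlen]) ?_ ?_ hty')
        · intro j h1' h2'
          rcases Nat.lt_or_ge j ss.length with hlt | hge
          · rw [get_concat_lt _ _ _ _ hlt, get_concat_lt _ _ _ _ (hlen ▸ hlt)]
            exact .of_approx (hpt j hlt (hlen ▸ hlt))
          · have hi : j = ss.length := by simp at h1'; omega
            rw [get_concat_at _ _ _ _ hi, get_concat_at _ _ _ _ (hlen ▸ hi)]
            exact .of_gr hb
        · rw [get_concat_at _ _ _ _ rfl, get_concat_at _ _ _ _ hlen]
          exact hb
    | args f g ss ts heq hfty hpi hlen hpt _ =>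
      rw [← appList_concat, ← appList_concat]
      have hty' : sameTy S (Tm.appList (.fn f) (ss ++ [t]))
          (Tm.appList (.fn g) (ts ++ [t'])) := by
        rw [appList_concat, appList_concat]; exact hty
      have hptw : ∀ (hb : GrEq S t t') (j : ℕ) (h1' : j < (ss ++ [t]).length)
          (h2' : j < (ts ++ [t']).length), j + 1 ∈ S.pi f →
          GrEq S ((ss ++ [t]).get ⟨j, h1'⟩) ((ts ++ [t']).get ⟨j, h2'⟩) := by
        intro hb j h1' h2' hmem
        rcases Nat.lt_or_ge j ss.length with hlt | hge
        · rw [get_concat_lt _ _ _ _ hlt, get_concat_lt _ _ _ _ (hlen ▸ hlt)]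
          exact .of_approx (hpt j hlt (hlen ▸ hlt) hmem)
        · have hi : j = ss.length := by simp at h1'; omega
          rw [get_concat_at _ _ _ _ hi, get_concat_at _ _ _ _ (hlen ▸ hi)]
          exact hb
      cases h2 with
      | of_approx hb =>
        refine .of_approx (Approx.args f g (ss ++ [t]) (ts ++ [t']) heq hfty hpi
          (by simp [hlen]) ?_ hty')
        intro i hi1 hi2 hmem
        rcases Nat.lt_or_ge i ss.length with hlt | hge
        · rw [get_concat_lt _ _ _ _ hlt, get_concat_lt _ _ _ _ (hlen ▸ hlt)]
          exact hpt i hlt (hlen ▸ hlt) hmem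
        · have hi : i = ss.length := by simp at hi1; omega
          rw [get_concat_at _ _ _ _ hi, get_concat_at _ _ _ _ (hlen ▸ hi)]
          exact hb
      | of_gr hb =>
        by_cases hmem : ss.length + 1 ∈ S.pi f
        · refine .of_gr (Gr.args f g (ss ++ [t]) (ts ++ [t']) ss.length (by simp)
            (by simp [hlen]) heq hfty hpi (by simp [hlen])
            (hptw (.of_gr hb)) hmem ?_ hty')
          rw [get_concat_at _ _ _ _ rfl, get_concat_at _ _ _ _ hlen]
          exact hb
        · refine .of_approx (Approx.args f g (ss ++ [t]) (ts ++ [t']) heq hfty hpi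
            (by simp [hlen]) ?_ hty')
          intro i hi1 hi2 hm
          rcases Nat.lt_or_ge i ss.length with hlt | hge
          · rw [get_concat_lt _ _ _ _ hlt, get_concat_lt _ _ _ _ (hlen ▸ hlt)]
            exact hpt i hlt (hlen ▸ hlt) hm
          · have hi : i = ss.length := by simp at hi1; omega
            exact absurd (hi ▸ hm) hmem
  | of_gr hg =>
    cases hg with
    | mono x ss ts i hi1 hi2 hlen hge hgi _ =>
      rw [← appList_concat, ← appList_concat]
      have hty' : sameTy S (Tm.appList (.fv x) (ss ++ [t]))
          (Tm.appList (.fv x) (ts ++ [t'])) := by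
        rw [appList_concat, appList_concat]; exact hty
      refine .of_gr (Gr.mono x (ss ++ [t]) (ts ++ [t']) i (by simp; omega)
        (by simp; omega) (by simp [hlen]) ?_ ?_ hty')
      · intro j h1' h2'
        rcases Nat.lt_or_ge j ss.length with hlt | hge'
        · rw [get_concat_lt _ _ _ _ hlt, get_concat_lt _ _ _ _ (hlen ▸ hlt)]
          exact hge j hlt (hlen ▸ hlt)
        · have hj : j = ss.length := by simp at h1'; omega
          rw [get_concat_at _ _ _ _ hj, get_concat_at _ _ _ _ (hlen ▸ hj)]
          exact h2
      · rw [get_concat_lt _ _ _ _ hi1, get_concat_lt _ _ _ _ hi2]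
        exact hgi
    | args f g ss ts i hi1 hi2 heq hfty hpi hlen hgej hmem hgi _ =>
      rw [← appList_concat, ← appList_concat]
      have hty' : sameTy S (Tm.appList (.fn f) (ss ++ [t]))
          (Tm.appList (.fn g) (ts ++ [t'])) := by
        rw [appList_concat, appList_concat]; exact hty
      refine .of_gr (Gr.args f g (ss ++ [t]) (ts ++ [t']) i (by simp; omega)
        (by simp; omega) heq hfty hpi (by simp [hlen]) ?_ hmem ?_ hty')
      · intro j h1' h2' hm
        rcases Nat.lt_or_ge j ss.length with hlt | hge'
        · rw [get_concat_lt _ _ _ _ hlt, get_concat_lt _ _ _ _ (hlen ▸ hlt)]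
          exact hgej j hlt (hlen ▸ hlt) hm
        · have hj : j = ss.length := by simp at h1'; omega
          rw [get_concat_at _ _ _ _ hj, get_concat_at _ _ _ _ (hlen ▸ hj)]
          exact h2
      · rw [get_concat_lt _ _ _ _ hi1, get_concat_lt _ _ _ _ hi2]
        exact hgi
    | rpo hr _ =>
      exact .of_gr (Gr.rpo (rpo_app hr hs h2) hty)

end Horpo
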